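/- arXiv:1809.09192 — 3 statements merged into one kernel-verified Lean document; each statement's English description precedes it below -/
import Mathlib

section
/- Let a, b ≥ 2 be integers such that log a and log b are linearly independent over ℚ. Enumerate the set S = {a^m · b^n : m, n ∈ ℕ} as a strictly increasing sequence of natural numbers (s_k)_{k∈ℕ}. Then the ratio s_{k+1} / s_k tends to 1 as k → ∞. -/
open Filter

set_option maxHeartbeats 1000000

-- generic: from 0 < t ≤ ζ ≤ 1/2, find k ≥ 1 with 1-ζ ≤ k*t < 1 and k*?
lemma mult_trick {t ζ : ℝ} (h1 : 0 < t) (h2 : t ≤ ζ) (hζ1 : ζ ≤ 1/2) :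
    ∃ k : ℕ, 1 ≤ k ∧ 1 - ζ ≤ (k : ℝ) * t ∧ (k : ℝ) * t < 1 := by
  have hx0 : 0 ≤ (1 - ζ) / t := div_nonneg (by linarith) h1.le
  refine ⟨⌈(1 - ζ) / t⌉₊, ?_, ?_, ?_⟩
  · have h := Nat.one_le_ceil_iff.2 (div_pos (by linarith : (0:ℝ) < 1 - ζ) h1)
    exact h
  · have h := Nat.le_ceil ((1 - ζ) / t)
    rw [div_le_iff₀ h1] at h
    linarith
  · have h : (⌈(1 - ζ) / t⌉₊ : ℝ) < (1 - ζ) / t + 1 := Nat.ceil_lt_add_one hx0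
    have h3 : (⌈(1 - ζ) / t⌉₊ : ℝ) * t < ((1 - ζ) / t + 1) * t := by nlinarith
    rw [add_mul, div_mul_cancel₀ _ (ne_of_gt h1)] at h3
    linarith

-- convert "n - mθ small positive" into "m'θ - n' small positive"
lemma conv2 {θ ζ : ℝ} (hθ : 0 ≤ θ) (hζ0 : 0 < ζ) (hζ1 : ζ ≤ 1/2) {m n : ℕ}
    (h1 : 0 < (n : ℝ) - m * θ) (h2 : (n : ℝ) - m * θ ≤ ζ) :
    ∃ m' n' : ℕ, 0 < (m' : ℝ) * θ - n' ∧ (m' : ℝ) * θ - n' ≤ ζ := by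
  have hn1 : 1 ≤ n := by
    by_contra h
    push_neg at h
    interval_cases n
    push_cast at h1
    nlinarith [mul_nonneg (Nat.cast_nonneg (α := ℝ) m) hθ]
  obtain ⟨k, hk1, hkt1, hkt2⟩ := mult_trick h1 h2 hζ1
  have hkn1 : 1 ≤ k * n := Nat.one_le_iff_ne_zero.2 (by positivity)
  refine ⟨k * m, k * n - 1, ?_, ?_⟩ <;>
  · have hc : ((k * n - 1 : ℕ) : ℝ) = (k : ℝ) * n - 1 := by
      push_cast [Nat.cast_sub hkn1]; ring
    push_cast [hc]
    nlinarith

-- convert "mθ - n small positive" into "n' - m'θ small positive"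
lemma conv1 {θ ζ : ℝ} (hζ1 : ζ ≤ 1/2) {m n : ℕ}
    (h1 : 0 < (m : ℝ) * θ - n) (h2 : (m : ℝ) * θ - n ≤ ζ) :
    ∃ m' n' : ℕ, 0 < (n' : ℝ) - m' * θ ∧ (n' : ℝ) - m' * θ ≤ ζ := by
  obtain ⟨k, hk1, hkt1, hkt2⟩ := mult_trick h1 h2 hζ1
  refine ⟨k * m, k * n + 1, ?_, ?_⟩ <;> · push_cast; nlinarith

-- both kinds of approximation
lemma key {θ : ℝ} (hθ : Irrational θ) (hpos : 0 < θ) {ζ : ℝ} (hζ : 0 < ζ) :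
    (∃ m n : ℕ, 0 < (m : ℝ) * θ - n ∧ (m : ℝ) * θ - n < ζ) ∧
    (∃ m n : ℕ, 0 < (n : ℝ) - m * θ ∧ (n : ℝ) - m * θ < ζ) := by
  set ζ' : ℝ := min ζ (min θ 1) / 2 with hζ'def
  have hζ'0 : 0 < ζ' := by
    have : 0 < min ζ (min θ 1) := lt_min hζ (lt_min hpos one_pos)
    positivity
  have hζ'ζ : ζ' < ζ := by
    have h := min_le_left ζ (min θ 1)
    simp only [hζ'def]; linarith
  have hζ'θ : ζ' < θ := by
    have h := (min_le_right ζ (min θ 1)).trans (min_le_left θ 1)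
    simp only [hζ'def]; linarith
  have hζ'h : ζ' ≤ 1/2 := by
    have h := (min_le_right ζ (min θ 1)).trans (min_le_right θ 1)
    simp only [hζ'def]; linarith
  obtain ⟨N, hN⟩ := exists_nat_one_div_lt hζ'0
  obtain ⟨j, k, hk0, hkN, hjk⟩ := Real.exists_int_int_abs_mul_sub_le θ (Nat.succ_pos N)
  have hsmall : |(k : ℝ) * θ - j| < ζ' := by
    calc |(k : ℝ) * θ - j| ≤ 1 / (N + 1 + 1) := by exact_mod_cast hjk
    _ ≤ 1 / (N + 1) := by
        apply div_le_div_of_nonneg_left one_pos.le (by positivity); linarith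
    _ < ζ' := hN
  have htne : (k : ℝ) * θ - j ≠ 0 := by
    intro h
    apply hθ
    refine ⟨(j : ℚ) / (k : ℚ), ?_⟩
    have hk0' : (k : ℝ) ≠ 0 := by exact_mod_cast hk0.ne'
    push_cast
    field_simp
    linarith
  have hkθ : θ ≤ (k : ℝ) * θ := by
    nlinarith [(by exact_mod_cast hk0 : (0:ℝ) < k), (by exact_mod_cast hk0 : (1:ℝ) ≤ k)]
  rcases lt_or_gt_of_ne htne with hneg | hposi
  · -- j - kθ ∈ (0, ζ') : kind 2 raw
    have hj0 : 0 < j := by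
      have : (0 : ℝ) < j := by
        have := abs_lt.1 hsmall
        nlinarith
      exact_mod_cast this
    have hm : ((k.toNat : ℕ) : ℝ) = (k : ℝ) := by
      exact_mod_cast Int.toNat_of_nonneg hk0.le
    have hn : ((j.toNat : ℕ) : ℝ) = (j : ℝ) := by
      exact_mod_cast Int.toNat_of_nonneg hj0.le
    have h2a : 0 < ((j.toNat : ℕ) : ℝ) - (k.toNat : ℕ) * θ := by
      rw [hm, hn]; linarith
    have h2b : ((j.toNat : ℕ) : ℝ) - (k.toNat : ℕ) * θ ≤ ζ' := by
      rw [hm, hn]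
      have := abs_lt.1 hsmall
      linarith
    obtain ⟨m', n', h1', h2'⟩ := conv2 hpos.le hζ'0 hζ'h h2a h2b
    exact ⟨⟨m', n', h1', by linarith⟩, ⟨k.toNat, j.toNat, by rw [hm, hn] at h2a ⊢; linarith,
      by rw [hm, hn] at h2b ⊢; linarith⟩⟩
  · -- kθ - j ∈ (0, ζ') : kind 1 raw
    have hj0 : 0 ≤ j := by
      have : (0 : ℝ) < j := by
        have := abs_lt.1 hsmall
        nlinarith
      exact_mod_cast this.le
    have hm : ((k.toNat : ℕ) : ℝ) = (k : ℝ) := by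
      exact_mod_cast Int.toNat_of_nonneg hk0.le
    have hn : ((j.toNat : ℕ) : ℝ) = (j : ℝ) := by
      exact_mod_cast Int.toNat_of_nonneg hj0
    have h1a : 0 < ((k.toNat : ℕ) : ℝ) * θ - (j.toNat : ℕ) := by
      rw [hm, hn]; linarith
    have h1b : ((k.toNat : ℕ) : ℝ) * θ - (j.toNat : ℕ) ≤ ζ' := by
      rw [hm, hn]
      have := abs_lt.1 hsmall
      linarith
    obtain ⟨m', n', h1', h2'⟩ := conv1 hζ'h h1a h1b
    exact ⟨⟨k.toNat, j.toNat, h1a, by linarith⟩, ⟨m', n', h1', by linarith⟩⟩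


/-- Enumerating `S = {a^m b^n}` in increasing order as `s_k`, the ratio `s_{k+1}/s_k → 1`. -/
theorem statement1 (a b : ℕ) (ha : 2 ≤ a) (hb : 2 ≤ b)
    (hab : Irrational (Real.log a / Real.log b))
    (s : ℕ → ℕ) (hmono : StrictMono s)
    (hrange : Set.range s = {x : ℕ | ∃ m n : ℕ, x = a ^ m * b ^ n}) :
    Tendsto (fun k => (s (k + 1) : ℝ) / (s k : ℝ)) atTop (nhds 1) := by

  have ha1 : (1 : ℝ) < a := by exact_mod_cast lt_of_lt_of_le one_lt_two ha
  have hb1 : (1 : ℝ) < b := by exact_mod_cast lt_of_lt_of_le one_lt_two hb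
  have hla : 0 < Real.log a := Real.log_pos ha1
  have hlb : 0 < Real.log b := Real.log_pos hb1
  have hθpos : 0 < Real.log a / Real.log b := div_pos hla hlb
  rw [Metric.tendsto_nhds]
  intro ε hε
  -- get the two approximations
  have hζ : 0 < Real.log (1 + ε) / Real.log b :=
    div_pos (Real.log_pos (by linarith)) hlb
  obtain ⟨⟨m, n, h1a, h1b⟩, ⟨m', n', h2a, h2b⟩⟩ := key hab hθpos hζ
  -- translate to inequalities between powers
  have hbn : (0:ℝ) < (b:ℝ) ^ n := by positivity
  have hbn' : (0:ℝ) < (b:ℝ) ^ n' := by positivity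
  have ham : (0:ℝ) < (a:ℝ) ^ m := by positivity
  have ham' : (0:ℝ) < (a:ℝ) ^ m' := by positivity
  have key1 : (b:ℝ) ^ n < (a:ℝ) ^ m ∧ (a:ℝ) ^ m < (b:ℝ) ^ n * (1 + ε) := by
    have e1 : Real.log ((b:ℝ) ^ n) < Real.log ((a:ℝ) ^ m) := by
      rw [Real.log_pow, Real.log_pow]
      have := mul_pos h1a hlb
      rw [sub_mul, mul_assoc, div_mul_cancel₀ _ hlb.ne'] at this
      linarith
    have e2 : Real.log ((a:ℝ) ^ m) < Real.log ((b:ℝ) ^ n * (1 + ε)) := by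
      rw [Real.log_mul hbn.ne' (by linarith), Real.log_pow, Real.log_pow]
      have := mul_lt_mul_of_pos_right h1b hlb
      rw [sub_mul, mul_assoc, div_mul_cancel₀ _ hlb.ne',
        div_mul_cancel₀ _ hlb.ne'] at this
      linarith
    exact ⟨(Real.log_lt_log_iff hbn ham).1 e1,
      (Real.log_lt_log_iff ham (by positivity)).1 e2⟩
  have key2 : (a:ℝ) ^ m' < (b:ℝ) ^ n' ∧ (b:ℝ) ^ n' < (a:ℝ) ^ m' * (1 + ε) := by
    have e1 : Real.log ((a:ℝ) ^ m') < Real.log ((b:ℝ) ^ n') := by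
      rw [Real.log_pow, Real.log_pow]
      have := mul_pos h2a hlb
      rw [sub_mul, mul_assoc, div_mul_cancel₀ _ hlb.ne'] at this
      linarith
    have e2 : Real.log ((b:ℝ) ^ n') < Real.log ((a:ℝ) ^ m' * (1 + ε)) := by
      rw [Real.log_mul ham'.ne' (by linarith), Real.log_pow, Real.log_pow]
      have := mul_lt_mul_of_pos_right h2b hlb
      rw [sub_mul, mul_assoc, div_mul_cancel₀ _ hlb.ne',
        div_mul_cancel₀ _ hlb.ne'] at this
      linarith
    exact ⟨(Real.log_lt_log_iff ham' hbn').1 e1,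
      (Real.log_lt_log_iff hbn' (by positivity)).1 e2⟩
  -- threshold
  have hTmem : ∀ k : ℕ, ∃ M N : ℕ, s k = a ^ M * b ^ N := by
    intro k
    have : s k ∈ Set.range s := Set.mem_range_self k
    rw [hrange] at this
    exact this
  filter_upwards [eventually_ge_atTop (a ^ m' * b ^ n)] with k hk
  have hkT : a ^ m' * b ^ n ≤ s k := le_trans hk hmono.le_apply
  obtain ⟨M, N, hMN⟩ := hTmem k
  have hsk0 : 0 < s k := by
    rw [hMN]; positivity
  have hsk0' : (0:ℝ) < (s k : ℝ) := by exact_mod_cast hsk0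
  -- find y ∈ S with s k < y and y < (1+ε) * s k
  have hy : ∃ y : ℕ, (∃ M' N' : ℕ, y = a ^ M' * b ^ N') ∧ s k < y ∧
      (y : ℝ) < (1 + ε) * (s k : ℝ) := by
    rcases le_or_gt n N with hnN | hnN
    · refine ⟨a ^ (M + m) * b ^ (N - n), ⟨M + m, N - n, rfl⟩, ?_, ?_⟩
      all_goals
        have hnat : a ^ (M + m) * b ^ (N - n) * b ^ n = s k * a ^ m := by
          rw [hMN, mul_assoc, ← pow_add, Nat.sub_add_cancel hnN, pow_add]; ring
        have hreal : ((a ^ (M + m) * b ^ (N - n) : ℕ) : ℝ) * (b:ℝ) ^ n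
            = (s k : ℝ) * (a:ℝ) ^ m := by exact_mod_cast congrArg (Nat.cast (R := ℝ)) hnat
      · have : ((s k : ℕ) : ℝ) * (b:ℝ)^n < ((a ^ (M + m) * b ^ (N - n) : ℕ) : ℝ) * (b:ℝ)^n := by
          rw [hreal]
          nlinarith [key1.1]
        exact_mod_cast lt_of_mul_lt_mul_right this hbn.le
      · have h3 : ((a ^ (M + m) * b ^ (N - n) : ℕ) : ℝ) * (b:ℝ)^n
            < ((1 + ε) * (s k : ℝ)) * (b:ℝ)^n := by
          rw [hreal]
          nlinarith [key1.2]
        exact lt_of_mul_lt_mul_right h3 hbn.le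
    · -- N < n, show m' ≤ M
      have hm'M : m' ≤ M := by
        have h1 : a ^ m' * b ^ N ≤ a ^ M * b ^ N := by
          calc a ^ m' * b ^ N ≤ a ^ m' * b ^ n :=
                Nat.mul_le_mul_left _ (Nat.pow_le_pow_right (by omega) hnN.le)
          _ ≤ s k := hkT
          _ = a ^ M * b ^ N := hMN
        have h2 : a ^ m' ≤ a ^ M :=
          Nat.le_of_mul_le_mul_right h1 (by positivity)
        exact (Nat.pow_le_pow_iff_right (by omega)).1 h2
      refine ⟨a ^ (M - m') * b ^ (N + n'), ⟨M - m', N + n', rfl⟩, ?_, ?_⟩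
      all_goals
        have hnat : a ^ (M - m') * b ^ (N + n') * a ^ m' = s k * b ^ n' := by
          rw [hMN, mul_comm (a ^ (M - m') * b ^ (N + n')) (a ^ m'), ← mul_assoc,
            ← pow_add, Nat.add_sub_cancel' hm'M, pow_add]; ring
        have hreal : ((a ^ (M - m') * b ^ (N + n') : ℕ) : ℝ) * (a:ℝ) ^ m'
            = (s k : ℝ) * (b:ℝ) ^ n' := by exact_mod_cast congrArg (Nat.cast (R := ℝ)) hnat
      · have : ((s k : ℕ) : ℝ) * (a:ℝ)^m' < ((a ^ (M - m') * b ^ (N + n') : ℕ) : ℝ) * (a:ℝ)^m' := by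
          rw [hreal]
          nlinarith [key2.1]
        exact_mod_cast lt_of_mul_lt_mul_right this ham'.le
      · have h3 : ((a ^ (M - m') * b ^ (N + n') : ℕ) : ℝ) * (a:ℝ)^m'
            < ((1 + ε) * (s k : ℝ)) * (a:ℝ)^m' := by
          rw [hreal]
          nlinarith [key2.2]
        exact lt_of_mul_lt_mul_right h3 ham'.le
  obtain ⟨y, hyS, hylt, hyup⟩ := hy
  -- s (k+1) ≤ y
  have hnext : s (k + 1) ≤ y := by
    have : y ∈ Set.range s := by rw [hrange]; exact hyS
    obtain ⟨j, hj⟩ := this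
    have hkj : k < j := by
      by_contra h
      push_neg at h
      have := hmono.monotone h
      omega
    calc s (k + 1) ≤ s j := hmono.monotone hkj
    _ = y := hj
  -- conclude
  have hr1 : (1:ℝ) < (s (k+1) : ℝ) / (s k : ℝ) := by
    rw [lt_div_iff₀ hsk0', one_mul]
    exact_mod_cast hmono (Nat.lt_succ_self k)
  have hr2 : (s (k+1) : ℝ) / (s k : ℝ) < 1 + ε := by
    rw [div_lt_iff₀ hsk0']
    calc (s (k+1) : ℝ) ≤ (y : ℝ) := by exact_mod_cast hnext
    _ < (1 + ε) * (s k : ℝ) := hyup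
  rw [Real.dist_eq, abs_sub_lt_iff]
  constructor <;> linarith
end

section
/- Let ν be a finite Borel measure on ℝ supported in [0, r₀] for some r₀ > 0, and let λ ∈ (0,1). Then for Lebesgue-almost every r ∈ [0, r₀], the series ∑_{j=0}^∞ ν([r − λ^j, r + λ^j]) converges. -/
/-!
Integrating over `r` and swapping the order of integration (Tonelli) gives
`∫⁻ r, ν [r - c, r + c] = 2c · ν ℝ`, since `r ∈ [x - c, x + c] ↔ x ∈ [r - c, r + c]`.
Summing over the radii `c = λ^j`, the function `r ↦ ∑ⱼ ν [r - λ^j, r + λ^j]` has finite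
integral `2 ν(ℝ) / (1 - λ)`, so it is finite almost everywhere.
-/

open MeasureTheory Metric

section ClosedBall

variable {α : Type*} [PseudoMetricSpace α] [MeasurableSpace α] [OpensMeasurableSpace α]
  [SecondCountableTopology α]

lemma measurableSet_dist_swap_le (c : ℝ) : MeasurableSet {p : α × α | dist p.2 p.1 ≤ c} :=
  measurableSet_le (measurable_dist.comp measurable_swap) measurable_const

lemma measurable_measure_closedBall (ν : Measure α) [SFinite ν] (c : ℝ) :
    Measurable fun x => ν (closedBall x c) :=
  measurable_measure_prodMk_left (measurableSet_dist_swap_le c)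

lemma lintegral_measure_closedBall_comm (μ ν : Measure α) [SFinite μ] [SFinite ν] (c : ℝ) :
    ∫⁻ x, ν (closedBall x c) ∂μ = ∫⁻ y, μ (closedBall y c) ∂ν := by
  have hs := measurableSet_dist_swap_le (α := α) c
  calc ∫⁻ x, ν (closedBall x c) ∂μ = μ.prod ν {p | dist p.2 p.1 ≤ c} :=
        (Measure.prod_apply hs).symm
    _ = ∫⁻ y, μ (closedBall y c) ∂ν := by
        rw [Measure.prod_apply_symm hs]
        exact lintegral_congr fun y => congrArg μ (Set.ext fun x => by simp [dist_comm])

end ClosedBall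

lemma Real.lintegral_measure_closedBall (ν : Measure ℝ) [SFinite ν] (c : ℝ) :
    ∫⁻ r, ν (closedBall r c) = ENNReal.ofReal (2 * c) * ν Set.univ := by
  rw [lintegral_measure_closedBall_comm]
  simp only [Real.volume_closedBall, lintegral_const]

lemma Real.ae_tsum_measure_closedBall_lt_top (ν : Measure ℝ) [IsFiniteMeasure ν] {c : ℕ → ℝ}
    (hc : ∑' j, ENNReal.ofReal (c j) ≠ ⊤) :
    ∀ᵐ r, ∑' j, ν (closedBall r (c j)) < ⊤ := by
  have hmeas j := measurable_measure_closedBall ν (c j)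
  refine ae_lt_top (Measurable.tsum hmeas) ?_
  rw [lintegral_tsum fun j => (hmeas j).aemeasurable]
  simp_rw [Real.lintegral_measure_closedBall, ENNReal.ofReal_mul zero_le_two,
    ENNReal.ofReal_ofNat, ENNReal.tsum_mul_right, ENNReal.tsum_mul_left]
  exact ENNReal.mul_ne_top (ENNReal.mul_ne_top ENNReal.ofNat_ne_top hc) (measure_ne_top ν _)

lemma ENNReal.tsum_ofReal_pow_ne_top {l : ℝ} (hl : l ∈ Set.Ioo (0 : ℝ) 1) :
    ∑' j : ℕ, ENNReal.ofReal (l ^ j) ≠ ⊤ := by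
  simp_rw [ENNReal.ofReal_pow hl.1.le]
  rw [ENNReal.tsum_geometric]
  exact ENNReal.inv_ne_top.2 (tsub_pos_of_lt (ENNReal.ofReal_lt_one.2 hl.2)).ne'

theorem statement3_general (ν : Measure ℝ) [IsFiniteMeasure ν] (r₀ : ℝ)
    (l : ℝ) (hl : l ∈ Set.Ioo (0 : ℝ) 1) :
    ∀ᵐ r ∂(volume.restrict (Set.Icc 0 r₀)),
      ∑' j : ℕ, ν (Set.Icc (r - l ^ j) (r + l ^ j)) < ⊤ := by
  refine ae_restrict_of_ae ?_
  simpa only [Real.closedBall_eq_Icc] using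
    Real.ae_tsum_measure_closedBall_lt_top ν (ENNReal.tsum_ofReal_pow_ne_top hl)

/-- Borel–Cantelli lemma for radii: for a finite measure `ν` supported in `[0,r₀]`
and `λ ∈ (0,1)`, for Lebesgue-a.e. `r ∈ [0,r₀]` the series `∑ⱼ ν [r-λ^j, r+λ^j]` converges. -/
theorem statement3 (ν : Measure ℝ) [IsFiniteMeasure ν] (r₀ : ℝ) (hr₀ : 0 < r₀)
    (hsupp : ν (Set.Icc 0 r₀)ᶜ = 0) (l : ℝ) (hl : l ∈ Set.Ioo (0 : ℝ) 1) :
    ∀ᵐ r ∂(volume.restrict (Set.Icc 0 r₀)),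
      ∑' j : ℕ, ν (Set.Icc (r - l ^ j) (r + l ^ j)) < ⊤ :=
  statement3_general ν r₀ l hl
end

section
/- Let ν be a nonzero locally finite Borel measure on ℝ such that for every t ∈ ℝ there exists c(t) > 0 with (T_t)_*ν = c(t)·ν. Then ν is equivalent to Lebesgue measure: there is a measurable function ρ : ℝ → (0, ∞) with ν = ρ·m, where m is Lebesgue measure. Moreover ρ can be taken of the form ρ(x) = C·e^{αx} for constants C > 0 and α ∈ ℝ. -/
/-!
Comparing `ν` and its translates on one set of finite positive measure shows that the factor
`c t` is a measurable homomorphism `(ℝ, +) → (ℝ>0, ×)`, hence `c t = e^{βt}` (Steinhaus: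
measurable homomorphisms are continuous). The measure `e^{βx} ν` is then translation invariant
and locally finite, so by uniqueness of Haar measure it is `k • volume`; dividing the density
back out gives `ν = k e^{-βx} dx`.
-/

open MeasureTheory Measure Set
open scoped ENNReal NNReal

namespace MeasureTheory

variable {α β : Type*} [MeasurableSpace α] [MeasurableSpace β]

lemma exists_measurableSet_measure_pos_lt_top (μ : Measure α) [SigmaFinite μ] (hμ : μ ≠ 0) :
    ∃ s, MeasurableSet s ∧ 0 < μ s ∧ μ s < ∞ := by
  obtain ⟨n, hn⟩ := exists_measure_pos_of_not_measure_iUnion_null (s := spanningSets μ)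
    (by rwa [iUnion_spanningSets, Ne, measure_univ_eq_zero])
  exact ⟨_, measurableSet_spanningSets μ n, hn, measure_spanningSets_lt_top μ n⟩

lemma Measure.nnreal_smul_left_injective {μ : Measure α} [SigmaFinite μ] (hμ : μ ≠ 0)
    {c d : ℝ≥0} (h : c • μ = d • μ) : c = d := by
  obtain ⟨s, -, hs_pos, hs_fin⟩ := exists_measurableSet_measure_pos_lt_top μ hμ
  have hs := congrArg (· s) h
  simp only [Measure.smul_apply, ENNReal.smul_def, smul_eq_mul] at hs
  exact_mod_cast (ENNReal.mul_left_inj hs_pos.ne' hs_fin.ne).1 hs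

lemma _root_.MeasurableEquiv.map_withDensity (e : α ≃ᵐ β) (μ : Measure α) (f : α → ℝ≥0∞) :
    (μ.withDensity f).map e = (μ.map e).withDensity (f ∘ e.symm) := by
  ext s hs
  rw [e.map_apply, withDensity_apply _ (e.measurable hs), withDensity_apply _ hs, e.restrict_map,
    lintegral_map_equiv]
  simp

end MeasureTheory

section QuasiInvariant

variable {G : Type*} [AddGroup G] [MeasurableSpace G] [MeasurableAdd G]
  {ν : Measure G} {c : G → ℝ≥0}

lemma factor_add_of_map_add_right_eq_smul [SigmaFinite ν] (hν : ν ≠ 0)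
    (h : ∀ t, map (· + t) ν = c t • ν) (s t : G) : c (s + t) = c s * c t := by
  refine nnreal_smul_left_injective hν ?_
  calc c (s + t) • ν = map (· + t) (map (· + s) ν) := by
        rw [← h, map_map (measurable_add_const t) (measurable_add_const s)]
        simp only [Function.comp_def, add_assoc]
    _ = (c s * c t) • ν := by rw [h, Measure.map_smul, h, smul_smul]

lemma measurable_factor_of_map_add_right_eq_smul [MeasurableAdd₂ G] [SigmaFinite ν]
    (hν : ν ≠ 0) (h : ∀ t, map (· + t) ν = c t • ν) : Measurable c := by
  obtain ⟨A, hA, hA_pos, hA_fin⟩ := exists_measurableSet_measure_pos_lt_top ν hν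
  have hcA : ∀ t, (c t : ℝ≥0∞) = ν ((· + t) ⁻¹' A) / ν A := fun t => by
    rw [← map_apply (measurable_add_const t) hA, h, Measure.smul_apply, ENNReal.smul_def,
      smul_eq_mul, ENNReal.mul_div_cancel_right hA_pos.ne' hA_fin.ne]
  have hS : MeasurableSet {p : G × G | p.2 + p.1 ∈ A} := (measurable_snd.add measurable_fst) hA
  rw [← measurable_coe_nnreal_ennreal_iff, funext hcA]
  exact (measurable_measure_prodMk_left hS).div_const _

end QuasiInvariant

lemma exists_coe_eq_exp_mul_of_add_eq_mul {c : ℝ → ℝ≥0} (hpos : ∀ t, 0 < c t)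
    (hadd : ∀ s t, c (s + t) = c s * c t) (hc : Measurable c) :
    ∃ β : ℝ, ∀ t, (c t : ℝ) = Real.exp (β * t) := by
  let logc : ℝ →+ ℝ := AddMonoidHom.mk' (fun t => Real.log (c t)) fun s t => by
    simp only [hadd, NNReal.coe_mul,
      Real.log_mul (NNReal.coe_pos.2 (hpos s)).ne' (NNReal.coe_pos.2 (hpos t)).ne']
  have hcont : Continuous logc := logc.continuous_of_measurable hc.coe_nnreal_real.log
  refine ⟨Real.log (c 1), fun t => ?_⟩
  have hlin : Real.log (c t) = t * Real.log (c 1) := by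
    simpa [logc] using map_real_smul logc hcont t 1
  rw [← Real.exp_log (NNReal.coe_pos.2 (hpos t)), hlin, mul_comm]

section ExponentialFactor

variable {ν : Measure ℝ} {c : ℝ → ℝ≥0} {β : ℝ}

lemma map_add_right_withDensity_exp (h : ∀ t, map (· + t) ν = c t • ν)
    (hc : ∀ t, (c t : ℝ) = Real.exp (β * t)) (t : ℝ) :
    map (· + t) (ν.withDensity fun x => .ofReal (Real.exp (β * x))) =
      ν.withDensity fun x => .ofReal (Real.exp (β * x)) := by
  have hmap := (MeasurableEquiv.addRight t).map_withDensity ν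
    fun x => .ofReal (Real.exp (β * x))
  simp only [MeasurableEquiv.coe_addRight, MeasurableEquiv.symm_addRight] at hmap
  rw [hmap, h, ENNReal.smul_def, withDensity_smul_measure,
    ← withDensity_smul' _ _ ENNReal.coe_ne_top]
  congr 1
  ext x
  rw [Pi.smul_apply, Function.comp_apply, smul_eq_mul, ← ENNReal.ofReal_coe_nnreal, hc,
    ← ENNReal.ofReal_mul (Real.exp_pos _).le, ← Real.exp_add]
  ring_nf

lemma exists_eq_withDensity_exp_of_map_add_right_eq_smul [IsLocallyFiniteMeasure ν]
    (h : ∀ t, map (· + t) ν = c t • ν) (hc : ∀ t, (c t : ℝ) = Real.exp (β * t)) :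
    ∃ k : ℝ≥0, ν = volume.withDensity fun x => .ofReal (k * Real.exp (-β * x)) := by
  set μ := ν.withDensity fun x => .ofReal (Real.exp (β * x))
  have : IsAddLeftInvariant μ :=
    ⟨fun t => by simpa [add_comm] using map_add_right_withDensity_exp h hc t⟩
  have : IsLocallyFiniteMeasure μ := IsLocallyFiniteMeasure.withDensity_ofReal (by fun_prop)
  obtain ⟨k, hk⟩ : ∃ k : ℝ≥0, μ = k • volume := ⟨_, isAddLeftInvariant_eq_smul μ volume⟩
  refine ⟨k, ?_⟩
  have hν : ν = μ.withDensity fun x => (ENNReal.ofReal (Real.exp (β * x)))⁻¹ :=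
    (withDensity_inv_same (by fun_prop) (by simp [Real.exp_pos]) (by simp)).symm
  rw [hν, hk, ENNReal.smul_def, withDensity_smul_measure,
    ← withDensity_smul' _ _ ENNReal.coe_ne_top]
  congr 1
  ext x
  rw [Pi.smul_apply, smul_eq_mul, ENNReal.ofReal_mul k.coe_nonneg, ENNReal.ofReal_coe_nnreal,
    neg_mul, Real.exp_neg, ENNReal.ofReal_inv_of_pos (Real.exp_pos _)]

end ExponentialFactor

/-- If every translate of a nonzero locally finite measure `ν` on `ℝ` is proportional to `ν`,
then `ν` is equivalent to Lebesgue measure, with density of the form `C e^{αx}`. -/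
theorem statement5 (ν : Measure ℝ) [IsLocallyFiniteMeasure ν] (hν : ν ≠ 0)
    (hprop : ∀ t : ℝ, ∃ c : NNReal, 0 < c ∧ Measure.map (fun x => x + t) ν = c • ν) :
    (ν ≪ volume ∧ volume ≪ ν) ∧
    ∃ C : ℝ, 0 < C ∧ ∃ α : ℝ,
      ν = volume.withDensity fun x => ENNReal.ofReal (C * Real.exp (α * x)) := by
  choose c hc_pos hc using hprop
  obtain ⟨β, hβ⟩ := exists_coe_eq_exp_mul_of_add_eq_mul hc_pos
    (factor_add_of_map_add_right_eq_smul hν hc) (measurable_factor_of_map_add_right_eq_smul hν hc)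
  obtain ⟨k, hk⟩ := exists_eq_withDensity_exp_of_map_add_right_eq_smul hc hβ
  have hk_pos : 0 < k := pos_iff_ne_zero.2 fun hk0 => hν (by simp [hk, hk0])
  refine ⟨⟨hk ▸ withDensity_absolutelyContinuous _ _, hk ▸ ?_⟩, k, hk_pos, -β, hk⟩
  refine withDensity_absolutelyContinuous' (by fun_prop) (ae_of_all _ fun x => ?_)
  simpa [hk_pos.ne'] using Real.exp_pos (-β * x)
end
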